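/- For an invertible M ∈ K^{p×p} and A ∈ K^{m×n×p}, the multirank is invariant under exact *_M-CUR reconstruction: if A = C *_M U^+ *_M R with the construction of Theorem 3 (C = A(:,J,:), U = A(I,J,:), and U^+ the slice-wise pseudoinverse in the transformed domain), then rank_m(C *_M U^+ *_M R) = rank_m(A) and each component of rank_m(A) equals rank(Â^{(k)}(I,J)). -/

import Mathlib

open Matrix

variable {K : Type*} [RCLike K]

/-- Inclusion of a finite index set into the full index type. -/
def inc {m : ℕ} (I : Finset (Fin m)) : ↥I → Fin m := Subtype.val

/-- Spectral (operator 2-) norm of a matrix. -/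
noncomputable def specNorm {ι κ : Type*} [Fintype ι] [Fintype κ] [DecidableEq κ]
    (A : Matrix ι κ K) : ℝ :=
  ‖LinearMap.toContinuousLinearMap (Matrix.toEuclideanLin A)‖

/-- Mode-3 product of a third-order tensor (stack of frontal slices) with a matrix. -/
def mode3 {ι κ : Type*} {p q : ℕ} (A : Fin p → Matrix ι κ K)
    (M : Matrix (Fin q) (Fin p) K) : Fin q → Matrix ι κ K :=
  fun k => ∑ j, M k j • A j

/-- Facewise (slice-wise) product of third-order tensors. -/
def facewise {ι κ μ : Type*} [Fintype κ] {p : ℕ}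
    (X : Fin p → Matrix ι κ K) (Y : Fin p → Matrix κ μ K) : Fin p → Matrix ι μ K :=
  fun k => X k * Y k

/-- The linear-map-based tensor-tensor multiplication (`*_M` product). -/
noncomputable def mProd {ι κ μ : Type*} [Fintype κ] {p : ℕ}
    (A : Fin p → Matrix ι κ K) (B : Fin p → Matrix κ μ K)
    (M : Matrix (Fin p) (Fin p) K) : Fin p → Matrix ι μ K :=
  mode3 (facewise (mode3 A M) (mode3 B M)) M⁻¹

/-- Tensor spectral norm with respect to the `*_M` product. -/
noncomputable def tnorm {ι κ : Type*} [Fintype ι] [Fintype κ] [DecidableEq κ] {p : ℕ}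
    (A : Fin p → Matrix ι κ K) (M : Matrix (Fin p) (Fin p) K) : ℝ :=
  ⨆ k, specNorm ((mode3 A M) k)

/-- The four Penrose conditions: `V` is the Moore–Penrose pseudoinverse of `U`. -/
def IsMoorePenrose {ι κ : Type*} [Fintype ι] [Fintype κ]
    (U : Matrix ι κ K) (V : Matrix κ ι K) : Prop :=
  U * V * U = U ∧ V * U * V = V ∧ (U * V)ᴴ = U * V ∧ (V * U)ᴴ = V * U

/-- The `r`-th largest singular value of a matrix (1-indexed), i.e. the `r`-th largest
square root of an eigenvalue of `Uᴴ * U`. -/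
noncomputable def singularValue {ι κ : Type*} [Fintype ι] [Fintype κ] [DecidableEq κ]
    (U : Matrix ι κ K) (r : ℕ) : ℝ :=
  ((((Finset.univ.val).map (fun i =>
      Real.sqrt ((Matrix.isHermitian_conjTranspose_mul_self U).eigenvalues i))).sort
      (· ≤ ·)).reverse).getD (r - 1) 0

section Aux

lemma mode3_mode3 {ι κ : Type*} {p q r : ℕ} (A : Fin p → Matrix ι κ K)
    (M : Matrix (Fin r) (Fin q) K) (N : Matrix (Fin q) (Fin p) K) :
    mode3 (mode3 A N) M = mode3 A (M * N) := by
  funext k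
  simp only [mode3, Matrix.mul_apply, Finset.smul_sum, Finset.sum_smul, smul_smul]
  rw [Finset.sum_comm]

lemma mode3_one {ι κ : Type*} {p : ℕ} (A : Fin p → Matrix ι κ K) :
    mode3 A (1 : Matrix (Fin p) (Fin p) K) = A := by
  funext k
  simp [mode3, Matrix.one_apply, ite_smul]

lemma mode3_submatrix {ι κ ι' κ' : Type*} {p q : ℕ} (A : Fin p → Matrix ι κ K)
    (M : Matrix (Fin q) (Fin p) K) (f : ι' → ι) (g : κ' → κ) (k : Fin q) :
    (mode3 (fun j => (A j).submatrix f g) M) k = ((mode3 A M) k).submatrix f g := by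
  ext i j
  simp [mode3, Matrix.sum_apply]

lemma rank_submatrix_le' {ι κ ι' κ' : Type*} [Fintype ι] [Fintype κ] [Fintype ι']
    [Fintype κ'] [DecidableEq ι] [DecidableEq κ]
    (A : Matrix ι κ K) (f : ι' → ι) (g : κ' → κ) :
    (A.submatrix f g).rank ≤ A.rank := by
  have h : A.submatrix f g =
      ((1 : Matrix ι ι K).submatrix f (Equiv.refl ι)) * A *
        ((1 : Matrix κ κ K).submatrix (Equiv.refl κ) g) := by
    rw [Matrix.mul_submatrix_one, Matrix.one_submatrix_mul]
    simp
  rw [h]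
  exact (Matrix.rank_mul_le_left _ _).trans (Matrix.rank_mul_le_right _ _)

lemma mode3_mProd {ι κ μ : Type*} [Fintype κ] {p : ℕ}
    {M : Matrix (Fin p) (Fin p) K} (hMM : M * M⁻¹ = 1)
    (X : Fin p → Matrix ι κ K) (Y : Fin p → Matrix κ μ K) :
    mode3 (mProd X Y M) M = facewise (mode3 X M) (mode3 Y M) := by
  unfold mProd
  rw [mode3_mode3, hMM, mode3_one]

end Aux

/-- multirank invariance under exact `*_M`-CUR reconstruction. -/
theorem multirank_CUR_invariant {m n p : ℕ} (M : Matrix (Fin p) (Fin p) K)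
    (hM : IsUnit M.det) (A : Fin p → Matrix (Fin m) (Fin n) K)
    (I : Finset (Fin m)) (J : Finset (Fin n))
    (Up : Fin p → Matrix ↥J ↥I K)
    (hUp : ∀ k, IsMoorePenrose
      ((mode3 (fun k => (A k).submatrix (inc I) (inc J)) M) k) (Up k))
    (hrank : ∀ k, ((mode3 (fun k => (A k).submatrix (inc I) (inc J)) M) k).rank
      = ((mode3 A M) k).rank) :
    ∀ k, ((mode3 (mProd (mProd (fun k => (A k).submatrix id (inc J)) (mode3 Up M⁻¹) M)
        (fun k => (A k).submatrix (inc I) id) M) M) k).rank = ((mode3 A M) k).rank ∧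
      ((mode3 A M) k).rank = (((mode3 A M) k).submatrix (inc I) (inc J)).rank := by
  intro k
  have hMM : M * M⁻¹ = 1 := Matrix.mul_nonsing_inv M hM
  set B := (mode3 A M) k with hB
  set U := B.submatrix (inc I) (inc J) with hUdef
  set V := Up k with hV
  -- rewrite the hypotheses in terms of `U`
  have hsub : (mode3 (fun j => (A j).submatrix (inc I) (inc J)) M) k = U := by
    rw [mode3_submatrix]
  have hU : IsMoorePenrose U V := by rw [← hsub]; exact hUp k
  have hr : U.rank = B.rank := by rw [← hsub]; exact hrank k
  -- simplify the reconstructed slice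
  have hX : (mode3 (mProd (mProd (fun k => (A k).submatrix id (inc J)) (mode3 Up M⁻¹) M)
      (fun k => (A k).submatrix (inc I) id) M) M) k
      = (B.submatrix id (inc J)) * V * (B.submatrix (inc I) id) := by
    rw [mode3_mProd hMM, ]
    show (mode3 (mProd (fun k => (A k).submatrix id (inc J)) (mode3 Up M⁻¹) M) M) k *
        (mode3 (fun k => (A k).submatrix (inc I) id) M) k = _
    rw [mode3_mProd hMM, mode3_mode3, hMM, mode3_one]
    show ((mode3 (fun j => (A j).submatrix id (inc J)) M) k * Up k) *
        (mode3 (fun j => (A j).submatrix (inc I) id) M) k = _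
    rw [mode3_submatrix, mode3_submatrix]
  set X := (B.submatrix id (inc J)) * V * (B.submatrix (inc I) id) with hXdef
  -- the (I, J) submatrix of X is U
  have hXIJ : X.submatrix (inc I) (inc J) = U := by
    rw [hXdef,
      Matrix.submatrix_mul (B.submatrix id (inc J) * V) (B.submatrix (inc I) id)
        (inc I) id (inc J) Function.bijective_id,
      Matrix.submatrix_mul (B.submatrix id (inc J)) V
        (inc I) id (id : ↥I → ↥I) Function.bijective_id]
    simp only [Matrix.submatrix_submatrix, Matrix.submatrix_id_id, Function.comp_id,
      Function.id_comp]
    exact hU.1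
  -- upper bound
  have hle : X.rank ≤ B.rank := by
    have h1 : V.rank ≤ U.rank := by
      calc V.rank = (V * U * V).rank := by rw [hU.2.1]
        _ ≤ (V * U).rank := Matrix.rank_mul_le_left _ _
        _ ≤ U.rank := Matrix.rank_mul_le_right _ _
    calc X.rank ≤ (B.submatrix id (inc J) * V).rank := Matrix.rank_mul_le_left _ _
      _ ≤ V.rank := Matrix.rank_mul_le_right _ _
      _ ≤ U.rank := h1
      _ = B.rank := hr
  -- lower bound
  have hge : B.rank ≤ X.rank := by
    calc B.rank = U.rank := hr.symm
      _ = (X.submatrix (inc I) (inc J)).rank := by rw [hXIJ]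
      _ ≤ X.rank := rank_submatrix_le' X (inc I) (inc J)
  refine ⟨?_, ?_⟩
  · rw [hX]
    exact le_antisymm hle hge
  · exact hr.symm
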